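/- arXiv:2008.04792 — 4 statements merged into one kernel-verified Lean document; each statement's English description precedes it below -/
import Mathlib

section
/- Let θ ∈ [0,π), let m ∈ L¹(ℝ, ℂ) be continuous, and set M = ‖m‖_{L¹(ℝ)}. Define u(x) = (1/2) ∫_ℝ e^{−|x−y|} m(y) dy with derivative u_x(x) = −(1/2) ∫_ℝ sgn(x−y) e^{−|x−y|} m(y) dy, and set Q = (u + u_x)(ū − ū_x) and G = Re(e^{iθ}((u + u_x) m̄ − (ū − ū_x) m)). For a function g ∈ L¹(ℝ,ℂ) define (Δ^{−1}g)(x) = (1/2) ∫_ℝ e^{−|x−y|} g(y) dy and (Δ^{−1}(1 ± ∂ₓ)g)(x) = (1/2) ∫_ℝ (1 ∓ sgn(x−y)) e^{−|x−y|} g(y) dy. Define L^± = Δ^{−1}(1 ± ∂ₓ)(−G u + i Im(e^{iθ}Q) m) ∓ Δ^{−1}(G u_x). Then |L^±(x)| ≤ (5/2) M³ for every x ∈ ℝ. -/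
open MeasureTheory

/-!
Both kernels `e^{-|x-y|}` and `sgn(x-y) e^{-|x-y|}` are bounded by `1`, so
`‖u‖_∞, ‖u_x‖_∞ ≤ M/2` and `|u ± u_x| ≤ M`. Since `|e^{iθ}| = 1`, this gives `|G| ≤ 2M|m|`
and `|Im(e^{iθ}Q)| ≤ M²`, hence `|−Gu + i Im(e^{iθ}Q) m| ≤ 2M²|m|` and `|G u_x| ≤ M²|m|`.
Integrating these against the kernels `|(1 ∓ sgn) e^{-|·|}| ≤ 2` and `e^{-|·|} ≤ 1` gives
`|L^±| ≤ (2 · 2M³ + M³)/2`.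
-/

lemma Real.abs_sign_le_one (t : ℝ) : |Real.sign t| ≤ 1 := by
  rcases Real.sign_apply_eq t with h | h | h <;> simp [h]

lemma abs_mul_exp_neg_abs_le (c t : ℝ) : |c * Real.exp (-|t|)| ≤ |c| := by
  rw [abs_mul, abs_of_pos (Real.exp_pos _)]
  exact mul_le_of_le_one_right (abs_nonneg c)
    (Real.exp_le_one_iff.2 (neg_nonpos.2 (abs_nonneg t)))

lemma abs_exp_neg_abs_le_one (t : ℝ) : |Real.exp (-|t|)| ≤ 1 := by
  simpa only [one_mul, abs_one] using abs_mul_exp_neg_abs_le 1 t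

lemma abs_sign_mul_exp_neg_abs_le_one (t : ℝ) : |Real.sign t * Real.exp (-|t|)| ≤ 1 :=
  (abs_mul_exp_neg_abs_le _ t).trans (Real.abs_sign_le_one t)

lemma abs_one_sub_sign_mul_exp_neg_abs_le_two (t : ℝ) :
    |(1 - Real.sign t) * Real.exp (-|t|)| ≤ 2 :=
  (abs_mul_exp_neg_abs_le _ t).trans <|
    (abs_sub _ _).trans (by rw [abs_one]; linarith [Real.abs_sign_le_one t])

lemma abs_one_add_sign_mul_exp_neg_abs_le_two (t : ℝ) :
    |(1 + Real.sign t) * Real.exp (-|t|)| ≤ 2 :=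
  (abs_mul_exp_neg_abs_le _ t).trans <|
    (abs_add_le _ _).trans (by rw [abs_one]; linarith [Real.abs_sign_le_one t])

lemma norm_integral_ofReal_mul_le {α : Type*} [MeasurableSpace α] {μ : Measure α}
    {k : α → ℝ} {f g : α → ℂ} {C A : ℝ} (hg : Integrable g μ)
    (hk : ∀ y, |k y| ≤ C) (hf : ∀ y, ‖f y‖ ≤ A * ‖g y‖) :
    ‖∫ y, (k y : ℂ) * f y ∂μ‖ ≤ C * A * ∫ y, ‖g y‖ ∂μ := by
  have hint : ∫ y, C * (A * ‖g y‖) ∂μ = C * A * ∫ y, ‖g y‖ ∂μ := by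
    rw [integral_const_mul, integral_const_mul, mul_assoc]
  refine hint ▸ norm_integral_le_of_norm_le ((hg.norm.const_mul A).const_mul C)
    (Filter.Eventually.of_forall fun y => ?_)
  rw [norm_mul, Complex.norm_real, Real.norm_eq_abs]
  exact mul_le_mul (hk y) (hf y) (norm_nonneg _) ((abs_nonneg _).trans (hk y))

lemma norm_mul_integral_le_half {α : Type*} [MeasurableSpace α] {μ : Measure α}
    {c : ℂ} (hc : ‖c‖ = 1 / 2) {k : α → ℝ} (hk : ∀ y, |k y| ≤ 1) {g : α → ℂ}
    (hg : Integrable g μ) :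
    ‖c * ∫ y, (k y : ℂ) * g y ∂μ‖ ≤ (∫ y, ‖g y‖ ∂μ) / 2 := by
  have := norm_integral_ofReal_mul_le hg hk fun y => (one_mul ‖g y‖).ge
  rw [norm_mul, hc]
  linarith

lemma abs_re_exp_mul_I_mul_le (θ : ℝ) (z : ℂ) :
    |(Complex.exp (θ * Complex.I) * z).re| ≤ ‖z‖ :=
  (Complex.abs_re_le_norm _).trans_eq (by rw [norm_mul, Complex.norm_exp_ofReal_mul_I, one_mul])

lemma abs_im_exp_mul_I_mul_le (θ : ℝ) (z : ℂ) :
    |(Complex.exp (θ * Complex.I) * z).im| ≤ ‖z‖ :=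
  (Complex.abs_im_le_norm _).trans_eq (by rw [norm_mul, Complex.norm_exp_ofReal_mul_I, one_mul])

lemma norm_mul_conj_sub_mul_le {p q z : ℂ} {R : ℝ} (hp : ‖p‖ ≤ R) (hq : ‖q‖ ≤ R) :
    ‖p * starRingEnd ℂ z - q * z‖ ≤ 2 * R * ‖z‖ :=
  calc ‖p * starRingEnd ℂ z - q * z‖ ≤ ‖p‖ * ‖z‖ + ‖q‖ * ‖z‖ := by
        simpa only [norm_mul, RCLike.norm_conj] using norm_sub_le (p * starRingEnd ℂ z) (q * z)
    _ ≤ 2 * R * ‖z‖ := by nlinarith [norm_nonneg z]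

lemma norm_neg_ofReal_mul_add_I_mul_ofReal_mul_le {g s M : ℝ} {a z : ℂ}
    (hg : |g| ≤ 2 * M * ‖z‖) (ha : ‖a‖ ≤ M / 2) (hs : |s| ≤ M ^ 2) :
    ‖-(g : ℂ) * a + Complex.I * (s : ℂ) * z‖ ≤ 2 * M ^ 2 * ‖z‖ := by
  have hga : ‖-(g : ℂ) * a‖ ≤ 2 * M * ‖z‖ * (M / 2) := by
    rw [norm_mul, norm_neg, Complex.norm_real, Real.norm_eq_abs]
    exact mul_le_mul hg ha (norm_nonneg a) ((abs_nonneg g).trans hg)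
  have hsz : ‖Complex.I * (s : ℂ) * z‖ ≤ M ^ 2 * ‖z‖ := by
    rw [norm_mul, norm_mul, Complex.norm_I, one_mul, Complex.norm_real, Real.norm_eq_abs]
    exact mul_le_mul_of_nonneg_right hs (norm_nonneg z)
  linarith [norm_add_le_of_le hga hsz]

lemma norm_half_mul_add_half_mul_le {A B : ℂ} {a b : ℝ} (hA : ‖A‖ ≤ a) (hB : ‖B‖ ≤ b) :
    ‖(1 / 2 : ℂ) * A + (1 / 2) * B‖ ≤ (a + b) / 2 := by
  have h : ‖(1 / 2 : ℂ)‖ = 1 / 2 := by norm_num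
  have := norm_add_le_of_le (norm_mul_le_of_le h.le hA) (norm_mul_le_of_le h.le hB)
  linarith

theorem source_terms_pointwise_bound_general
    (θ : ℝ)
    (m : ℝ → ℂ) (hmi : Integrable m)
    (M : ℝ) (hM : M = ∫ y : ℝ, ‖m y‖)
    (u ux : ℝ → ℂ) (Q F : ℝ → ℂ) (G : ℝ → ℝ) (Lp Lm : ℝ → ℂ)
    (hu : ∀ x : ℝ, u x = (1/2 : ℂ) * ∫ y : ℝ, ((Real.exp (-|x - y|) : ℝ) : ℂ) * m y)
    (hux : ∀ x : ℝ, ux x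
      = -(1/2 : ℂ) * ∫ y : ℝ, ((Real.sign (x - y) * Real.exp (-|x - y|) : ℝ) : ℂ) * m y)
    (hQ : ∀ x : ℝ, Q x = (u x + ux x) * (starRingEnd ℂ (u x) - starRingEnd ℂ (ux x)))
    (hG : ∀ x : ℝ, G x = (Complex.exp (θ * Complex.I) *
      ((u x + ux x) * starRingEnd ℂ (m x)
        - (starRingEnd ℂ (u x) - starRingEnd ℂ (ux x)) * m x)).re)
    (hF : ∀ x : ℝ, F x = -((G x : ℝ) : ℂ) * u x
      + Complex.I * (((Complex.exp (θ * Complex.I) * Q x).im : ℝ) : ℂ) * m x)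
    (hLp : ∀ x : ℝ, Lp x
      = (1/2 : ℂ) * (∫ y : ℝ, (((1 - Real.sign (x - y)) * Real.exp (-|x - y|) : ℝ) : ℂ) * F y)
        - (1/2 : ℂ) * ∫ y : ℝ, ((Real.exp (-|x - y|) : ℝ) : ℂ) * (((G y : ℝ) : ℂ) * ux y))
    (hLm : ∀ x : ℝ, Lm x
      = (1/2 : ℂ) * (∫ y : ℝ, (((1 + Real.sign (x - y)) * Real.exp (-|x - y|) : ℝ) : ℂ) * F y)
        + (1/2 : ℂ) * ∫ y : ℝ, ((Real.exp (-|x - y|) : ℝ) : ℂ) * (((G y : ℝ) : ℂ) * ux y)) :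
    ∀ x : ℝ, ‖Lp x‖ ≤ (5/2) * M ^ 3 ∧ ‖Lm x‖ ≤ (5/2) * M ^ 3 := by
  have hu_le (y : ℝ) : ‖u y‖ ≤ M / 2 := hM ▸ hu y ▸
    norm_mul_integral_le_half (by norm_num) (fun z => abs_exp_neg_abs_le_one (y - z)) hmi
  have hux_le (y : ℝ) : ‖ux y‖ ≤ M / 2 := hM ▸ hux y ▸
    norm_mul_integral_le_half (by norm_num) (fun z => abs_sign_mul_exp_neg_abs_le_one (y - z)) hmi
  have hsum (y : ℝ) : ‖u y + ux y‖ ≤ M :=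
    (norm_add_le_of_le (hu_le y) (hux_le y)).trans_eq (add_halves M)
  have hdiff (y : ℝ) : ‖starRingEnd ℂ (u y) - starRingEnd ℂ (ux y)‖ ≤ M := by
    simpa only [RCLike.norm_conj, add_halves] using norm_sub_le_of_le
      ((RCLike.norm_conj (u y)).trans_le (hu_le y)) ((RCLike.norm_conj (ux y)).trans_le (hux_le y))
  have hG_le (y : ℝ) : |G y| ≤ 2 * M * ‖m y‖ :=
    hG y ▸ (abs_re_exp_mul_I_mul_le θ _).trans (norm_mul_conj_sub_mul_le (hsum y) (hdiff y))
  have hQ_le (y : ℝ) : |(Complex.exp (θ * Complex.I) * Q y).im| ≤ M ^ 2 := hQ y ▸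
    (abs_im_exp_mul_I_mul_le θ _).trans
      ((norm_mul_le_of_le (hsum y) (hdiff y)).trans_eq (sq M).symm)
  have hF_le (y : ℝ) : ‖F y‖ ≤ 2 * M ^ 2 * ‖m y‖ :=
    hF y ▸ norm_neg_ofReal_mul_add_I_mul_ofReal_mul_le (hG_le y) (hu_le y) (hQ_le y)
  have hGux_le (y : ℝ) : ‖((G y : ℝ) : ℂ) * ux y‖ ≤ M ^ 2 * ‖m y‖ :=
    (norm_mul_le_of_le (show ‖((G y : ℝ) : ℂ)‖ ≤ 2 * M * ‖m y‖ by
      rw [Complex.norm_real, Real.norm_eq_abs]; exact hG_le y) (hux_le y)).trans_eq (by ring)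
  intro x
  have hGux := norm_integral_ofReal_mul_le hmi (fun y => abs_exp_neg_abs_le_one (x - y)) hGux_le
  have hFp := norm_integral_ofReal_mul_le hmi
    (fun y => abs_one_sub_sign_mul_exp_neg_abs_le_two (x - y)) hF_le
  have hFm := norm_integral_ofReal_mul_le hmi
    (fun y => abs_one_add_sign_mul_exp_neg_abs_le_two (x - y)) hF_le
  rw [← hM] at hGux hFp hFm
  rw [hLp x, hLm x, sub_eq_add_neg, ← mul_neg]
  constructor
  · exact (norm_half_mul_add_half_mul_le hFp ((norm_neg _).trans_le hGux)).trans_eq (by ring)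
  · exact (norm_half_mul_add_half_mul_le hFm hGux).trans_eq (by ring)

theorem source_terms_pointwise_bound
    (θ : ℝ) (hθ : θ ∈ Set.Ico 0 Real.pi)
    (m : ℝ → ℂ) (hmc : Continuous m) (hmi : Integrable m)
    (M : ℝ) (hM : M = ∫ y : ℝ, ‖m y‖)
    (u ux : ℝ → ℂ) (Q F : ℝ → ℂ) (G : ℝ → ℝ) (Lp Lm : ℝ → ℂ)
    (hu : ∀ x : ℝ, u x = (1/2 : ℂ) * ∫ y : ℝ, ((Real.exp (-|x - y|) : ℝ) : ℂ) * m y)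
    (hux : ∀ x : ℝ, ux x
      = -(1/2 : ℂ) * ∫ y : ℝ, ((Real.sign (x - y) * Real.exp (-|x - y|) : ℝ) : ℂ) * m y)
    (hQ : ∀ x : ℝ, Q x = (u x + ux x) * (starRingEnd ℂ (u x) - starRingEnd ℂ (ux x)))
    (hG : ∀ x : ℝ, G x = (Complex.exp (θ * Complex.I) *
      ((u x + ux x) * starRingEnd ℂ (m x)
        - (starRingEnd ℂ (u x) - starRingEnd ℂ (ux x)) * m x)).re)
    (hF : ∀ x : ℝ, F x = -((G x : ℝ) : ℂ) * u x
      + Complex.I * (((Complex.exp (θ * Complex.I) * Q x).im : ℝ) : ℂ) * m x)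
    (hLp : ∀ x : ℝ, Lp x
      = (1/2 : ℂ) * (∫ y : ℝ, (((1 - Real.sign (x - y)) * Real.exp (-|x - y|) : ℝ) : ℂ) * F y)
        - (1/2 : ℂ) * ∫ y : ℝ, ((Real.exp (-|x - y|) : ℝ) : ℂ) * (((G y : ℝ) : ℂ) * ux y))
    (hLm : ∀ x : ℝ, Lm x
      = (1/2 : ℂ) * (∫ y : ℝ, (((1 + Real.sign (x - y)) * Real.exp (-|x - y|) : ℝ) : ℂ) * F y)
        + (1/2 : ℂ) * ∫ y : ℝ, ((Real.exp (-|x - y|) : ℝ) : ℂ) * (((G y : ℝ) : ℂ) * ux y)) :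
    ∀ x : ℝ, ‖Lp x‖ ≤ (5/2) * M ^ 3 ∧ ‖Lm x‖ ≤ (5/2) * M ^ 3 :=
  source_terms_pointwise_bound_general θ m hmi M hM u ux Q F G Lp Lm hu hux hQ hG hF hLp hLm
end

section
/- Let θ ∈ [0,π), T > 0, and M > 0. Let u : [0,T) × ℝ → ℂ be smooth, with u(t,·) and ∂ₜu(t,·) Schwartz in x for each t, set m = u − ∂ₓ²u, Q = (u + u_x)(ū − ū_x), J = Re(e^{iθ}Q), K = i Im(e^{iθ}Q) − ∂ₓJ, and suppose ∂ₜm + J ∂ₓm = K m on [0,T) × ℝ. Assume moreover that ‖m(t,·)‖_{L¹(ℝ)} ≤ M for all t ∈ [0,T). Then the pointwise inequality ∂ₜJ_x + J ∂ₓJ_x + (J_x)² ≤ 7 M³ |m| holds on [0,T) × ℝ, where J_x = ∂ₓJ and |m| is the complex modulus of m. -/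
/-!
Write `φ = u + u_x` and `χ = u - u_x`, so that `Q = φ χ̄`, `φ_x = φ - m`, `χ_x = m - χ` and
`J_x = Re (e^{iθ} (φ m̄ - m χ̄))`. A function `h` decaying at `+∞` satisfies
`h x = ∫_x^∞ e^{x-y} (h - h_x) y dy`, and symmetrically at `-∞`; hence `|φ|, |χ| ≤ ‖m‖_{L¹} ≤ M`.
Since `u_t = (1 - ∂ₓ²)⁻¹ m_t`, the transport equation turns `h = φ_t - J m` into a function with
`h - h_x = -conj (e^{iθ} Q) m`, so `|φ_t - J m| ≤ M³`, and likewise `|χ_t + J m| ≤ M³`.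
Expanding `J_{xt} + J J_{xx} + J_x²` with these, the `m_x` terms cancel and five terms remain,
each at most `M³ |m|` except one which is at most `2 M³ |m|`.
-/

open Set MeasureTheory Filter Topology ComplexConjugate Function SchwartzMap

section DecayingPrimitive

variable {E : Type*} [NormedAddCommGroup E] [NormedSpace ℝ E]

theorem norm_setIntegral_smul_le_integral_norm {c : ℝ → ℝ} {k : ℝ → E} {s : Set ℝ}
    (hs : MeasurableSet s) (hk : Integrable k) (hc : ∀ y ∈ s, ‖c y‖ ≤ 1) :
    ‖∫ y in s, c y • k y‖ ≤ ∫ y, ‖k y‖ := by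
  calc ‖∫ y in s, c y • k y‖ ≤ ∫ y in s, ‖k y‖ :=
        norm_integral_le_of_norm_le hk.norm.restrict (ae_restrict_of_forall_mem hs fun y hy =>
          (norm_smul (c y) (k y)).trans_le (mul_le_of_le_one_left (norm_nonneg _) (hc y hy)))
    _ ≤ ∫ y, ‖k y‖ := setIntegral_le_integral hk.norm (ae_of_all _ fun _ => norm_nonneg _)

theorem norm_exp_le_one_of_nonpos {z : ℝ} (hz : z ≤ 0) : ‖Real.exp z‖ ≤ 1 := by
  rw [Real.norm_of_nonneg (Real.exp_pos z).le]
  exact Real.exp_le_one_iff.2 hz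

variable [CompleteSpace E] {h h' : ℝ → E}

theorem eq_integral_Ioi_exp_smul_sub_deriv (hd : ∀ y, HasDerivAt h (h' y) y)
    (hlim : Tendsto h atTop (𝓝 0)) {x : ℝ} (hint : IntegrableOn (fun y => h y - h' y) (Ioi x)) :
    h x = ∫ y in Ioi x, Real.exp (x - y) • (h y - h' y) := by
  have hexp : ∀ y, HasDerivAt (fun y => Real.exp (x - y)) (-Real.exp (x - y)) y := fun y => by
    simpa using ((hasDerivAt_id y).const_sub x).exp
  have hw : ∀ y ∈ Ici x, HasDerivAt (fun y => Real.exp (x - y) • h y)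
      (-(Real.exp (x - y) • (h y - h' y))) y := fun y _ => by
    refine ((hexp y).smul (hd y)).congr_deriv ?_
    rw [smul_sub, neg_smul]; abel
  have hwint : IntegrableOn (fun y => -(Real.exp (x - y) • (h y - h' y))) (Ioi x) := by
    refine (hint.bdd_smul 1 (by fun_prop) (ae_restrict_of_forall_mem measurableSet_Ioi
      fun y hy => norm_exp_le_one_of_nonpos (sub_nonpos.2 (le_of_lt hy)))).neg
  have hwlim : Tendsto (fun y => Real.exp (x - y) • h y) atTop (𝓝 0) := by
    have : Tendsto (fun y => Real.exp (x - y)) atTop (𝓝 0) :=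
      Real.tendsto_exp_atBot.comp (tendsto_atBot_add_const_left _ x tendsto_neg_atTop_atBot)
    simpa using this.smul hlim
  have := integral_Ioi_of_hasDerivAt_of_tendsto' hw hwint hwlim
  rw [integral_neg, zero_sub, sub_self, Real.exp_zero, one_smul, neg_inj] at this
  exact this.symm

theorem eq_integral_Iic_exp_smul_add_deriv (hd : ∀ y, HasDerivAt h (h' y) y)
    (hlim : Tendsto h atBot (𝓝 0)) {x : ℝ} (hint : IntegrableOn (fun y => h y + h' y) (Iic x)) :
    h x = ∫ y in Iic x, Real.exp (y - x) • (h y + h' y) := by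
  have hw : ∀ y ∈ Iic x, HasDerivAt (fun y => Real.exp (y - x) • h y)
      (Real.exp (y - x) • (h y + h' y)) y := fun y _ => by
    refine ((((hasDerivAt_id y).sub_const x).exp).smul (hd y)).congr_deriv ?_
    rw [mul_one, smul_add, add_comm]; rfl
  have hwint : IntegrableOn (fun y => Real.exp (y - x) • (h y + h' y)) (Iic x) := by
    exact hint.bdd_smul 1 (by fun_prop) (ae_restrict_of_forall_mem measurableSet_Iic
      fun y hy => norm_exp_le_one_of_nonpos (sub_nonpos.2 hy))
  have hwlim : Tendsto (fun y => Real.exp (y - x) • h y) atBot (𝓝 0) := by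
    have : Tendsto (fun y => Real.exp (y - x)) atBot (𝓝 0) :=
      Real.tendsto_exp_atBot.comp (tendsto_atBot_add_const_right _ (-x) tendsto_id)
    simpa using this.smul hlim
  have := integral_Iic_of_hasDerivAt_of_tendsto' hw hwint hwlim
  rw [sub_zero, sub_self, Real.exp_zero, one_smul] at this
  exact this.symm

theorem norm_le_integral_norm_sub_deriv (hd : ∀ y, HasDerivAt h (h' y) y)
    (hlim : Tendsto h atTop (𝓝 0)) (hint : Integrable fun y => h y - h' y) (x : ℝ) :
    ‖h x‖ ≤ ∫ y, ‖h y - h' y‖ := by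
  rw [eq_integral_Ioi_exp_smul_sub_deriv hd hlim hint.integrableOn]
  exact norm_setIntegral_smul_le_integral_norm measurableSet_Ioi hint
    fun y hy => norm_exp_le_one_of_nonpos (sub_nonpos.2 (le_of_lt hy))

theorem norm_le_integral_norm_add_deriv (hd : ∀ y, HasDerivAt h (h' y) y)
    (hlim : Tendsto h atBot (𝓝 0)) (hint : Integrable fun y => h y + h' y) (x : ℝ) :
    ‖h x‖ ≤ ∫ y, ‖h y + h' y‖ := by
  rw [eq_integral_Iic_exp_smul_add_deriv hd hlim hint.integrableOn]
  exact norm_setIntegral_smul_le_integral_norm measurableSet_Iic hint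
    fun y hy => norm_exp_le_one_of_nonpos (sub_nonpos.2 hy)

end DecayingPrimitive

theorem integral_norm_mul_le {α R : Type*} [MeasurableSpace α] {μ : Measure α} [NormedRing R]
    {w k : α → R} {C : ℝ} (hw : ∀ y, ‖w y‖ ≤ C) (hk : Integrable k μ) :
    ∫ y, ‖w y * k y‖ ∂μ ≤ C * ∫ y, ‖k y‖ ∂μ := by
  rw [← integral_const_mul]
  refine integral_mono_of_nonneg (ae_of_all _ fun _ => norm_nonneg _) (hk.norm.const_mul C)
    (ae_of_all _ fun y => (norm_mul_le _ _).trans ?_)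
  exact mul_le_mul_of_nonneg_right (hw y) (norm_nonneg _)

theorem hasDerivWithinAt_re {f : ℝ → ℂ} {f' : ℂ} {s : Set ℝ} {t : ℝ}
    (h : HasDerivWithinAt f f' s t) : HasDerivWithinAt (fun τ => (f τ).re) f'.re s t :=
  Complex.reCLM.hasFDerivAt.comp_hasDerivWithinAt t h

theorem hasDerivAt_re {f : ℝ → ℂ} {f' : ℂ} {t : ℝ} (h : HasDerivAt f f' t) :
    HasDerivAt (fun τ => (f τ).re) f'.re t :=
  Complex.reCLM.hasFDerivAt.comp_hasDerivAt t h

section MixedPartials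

variable {E : Type*} [NormedAddCommGroup E] [NormedSpace ℝ E] {F : ℝ → ℝ → E} {s : Set ℝ}
  {t : ℝ}

theorem hasDerivAt_snd_of_differentiableOn (hF : DifferentiableOn ℝ (uncurry F) (s ×ˢ univ))
    (ht : t ∈ s) (x : ℝ) :
    HasDerivAt (F t) (fderivWithin ℝ (uncurry F) (s ×ˢ univ) (t, x) (0, 1)) x := by
  have hline : HasDerivAt (fun y : ℝ => (t, y)) ((0 : ℝ), (1 : ℝ)) x :=
    (hasDerivAt_const x t).prodMk (hasDerivAt_id x)
  rw [← hasDerivWithinAt_univ]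
  exact (hF (t, x) ⟨ht, mem_univ x⟩).hasFDerivWithinAt.comp_hasDerivWithinAt x
    hline.hasDerivWithinAt fun y _ => ⟨ht, mem_univ y⟩

theorem hasDerivWithinAt_fst_of_differentiableOn
    (hF : DifferentiableOn ℝ (uncurry F) (s ×ˢ univ)) (ht : t ∈ s) (x : ℝ) :
    HasDerivWithinAt (F · x) (fderivWithin ℝ (uncurry F) (s ×ˢ univ) (t, x) (1, 0)) s t := by
  have hline : HasDerivAt (fun τ : ℝ => (τ, x)) ((1 : ℝ), (0 : ℝ)) t :=
    (hasDerivAt_id t).prodMk (hasDerivAt_const t x)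
  exact (hF (t, x) ⟨ht, mem_univ x⟩).hasFDerivWithinAt.comp_hasDerivWithinAt t
    hline.hasDerivWithinAt fun τ hτ => mem_prod.2 ⟨hτ, mem_univ x⟩

theorem ContDiffOn.deriv_snd {m n : WithTop ℕ∞} (hF : ContDiffOn ℝ n (uncurry F) (s ×ˢ univ))
    (hs : UniqueDiffOn ℝ s) (hmn : m + 1 ≤ n) :
    ContDiffOn ℝ m (uncurry fun τ => deriv (F τ)) (s ×ˢ univ) := by
  have hF1 : DifferentiableOn ℝ (uncurry F) (s ×ˢ univ) :=
    hF.differentiableOn (by rintro rfl; simp at hmn)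
  refine ((hF.fderivWithin (hs.prod uniqueDiffOn_univ) hmn).clm_apply
    (contDiffOn_const (c := ((0 : ℝ), (1 : ℝ))))).congr ?_
  rintro ⟨τ, y⟩ ⟨hτ, -⟩
  exact (hasDerivAt_snd_of_differentiableOn hF1 hτ y).deriv

theorem hasDerivWithinAt_deriv_snd_of_contDiffOn (hs : Convex ℝ s) (hs' : (interior s).Nonempty)
    (hF : ContDiffOn ℝ 2 (uncurry F) (s ×ˢ univ)) {Ft : ℝ → ℝ → E}
    (hFt : ∀ τ ∈ s, ∀ y, HasDerivWithinAt (F · y) (Ft τ y) s τ) (ht : t ∈ s) (x : ℝ) :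
    HasDerivWithinAt (fun τ => deriv (F τ) x) (deriv (Ft t) x) s t := by
  have hsu : UniqueDiffOn ℝ s := uniqueDiffOn_convex hs hs'
  have hsu2 : UniqueDiffOn ℝ (s ×ˢ (univ : Set ℝ)) := hsu.prod uniqueDiffOn_univ
  set G : ℝ × ℝ → (ℝ × ℝ →L[ℝ] E) := fderivWithin ℝ (uncurry F) (s ×ˢ univ)
  have hF1 : DifferentiableOn ℝ (uncurry F) (s ×ˢ univ) := hF.differentiableOn (by norm_num)
  have hG : DifferentiableOn ℝ (uncurry fun τ y => G (τ, y)) (s ×ˢ univ) :=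
    (hF.fderivWithin hsu2 (by norm_num : (1 : WithTop ℕ∞) + 1 ≤ 2)).differentiableOn one_ne_zero
  have hFt_eq : Ft t = fun y => G (t, y) (1, 0) := funext fun y =>
    (hsu t ht).eq_deriv _ (hFt t ht y) (hasDerivWithinAt_fst_of_differentiableOn hF1 ht y)
  have hclosure : (t, x) ∈ closure (interior (s ×ˢ (univ : Set ℝ))) := by
    rw [interior_prod_eq, closure_prod_eq, interior_univ, closure_univ,
      hs.closure_interior_eq_closure_of_nonempty_interior hs']
    exact ⟨subset_closure ht, mem_univ x⟩
  have hsymm : IsSymmSndFDerivWithinAt ℝ (uncurry F) (s ×ˢ univ) (t, x) :=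
    (hF (t, x) ⟨ht, mem_univ x⟩).isSymmSndFDerivWithinAt (by simp) hsu2 hclosure ⟨ht, mem_univ x⟩
  have htime := (hasDerivWithinAt_fst_of_differentiableOn hG ht x).clm_apply
    (hasDerivWithinAt_const t s ((0 : ℝ), (1 : ℝ)))
  have hspace := (hasDerivAt_snd_of_differentiableOn hG ht x).clm_apply
    (hasDerivAt_const x ((1 : ℝ), (0 : ℝ)))
  simp only [map_zero, add_zero] at htime hspace
  rw [hFt_eq, hspace.deriv]
  exact (htime.congr (fun τ hτ => (hasDerivAt_snd_of_differentiableOn hF1 hτ x).deriv)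
    (hasDerivAt_snd_of_differentiableOn hF1 ht x).deriv).congr_deriv (hsymm (1, 0) (0, 1))

theorem hasDerivWithinAt_deriv_deriv_snd_of_contDiffOn (hs : Convex ℝ s)
    (hs' : (interior s).Nonempty) (hF : ContDiffOn ℝ 3 (uncurry F) (s ×ˢ univ))
    {Ft : ℝ → ℝ → E} (hFt : ∀ τ ∈ s, ∀ y, HasDerivWithinAt (F · y) (Ft τ y) s τ) (ht : t ∈ s)
    (x : ℝ) : HasDerivWithinAt (fun τ => deriv (deriv (F τ)) x) (deriv (deriv (Ft t)) x) s t :=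
  hasDerivWithinAt_deriv_snd_of_contDiffOn hs hs'
    (hF.deriv_snd (uniqueDiffOn_convex hs hs') (by norm_num))
    (fun τ hτ y => hasDerivWithinAt_deriv_snd_of_contDiffOn hs hs' (hF.of_le (by norm_num)) hFt hτ y)
    ht x

end MixedPartials

namespace Peakon

variable (a : ℂ) (v : ℝ → ℂ)

/-! Quantities attached to a profile `v = u(t, ·)`, with `a` standing for `e^{iθ}`.
`Jx a v` is the closed form of `deriv (J a v)` (`hasDerivAt_J`). -/

noncomputable def uPlus (y : ℝ) : ℂ := v y + deriv v y

noncomputable def uMinus (y : ℝ) : ℂ := v y - deriv v y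

noncomputable def momentum (y : ℝ) : ℂ := v y - deriv (deriv v) y

noncomputable def Q (y : ℝ) : ℂ := uPlus v y * conj (uMinus v y)

noncomputable def J (y : ℝ) : ℝ := (a * Q v y).re

noncomputable def Jx (y : ℝ) : ℝ :=
  (a * (uPlus v y * conj (momentum v y) - momentum v y * conj (uMinus v y))).re

/-- `m_t + J m_x = K m` at one time, with `v = u(t, ·)` and `w = u_t(t, ·)`, so that
`momentum w = m_t`. -/
def TransportEq (w : ℝ → ℂ) : Prop :=
  ∀ y, momentum w y + J a v y * deriv (momentum v) y
    = (Complex.I * (a * Q v y).im - Jx a v y) * momentum v y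

variable {a v}

theorem hasDerivAt_uPlus (hv : ContDiff ℝ 2 v) (y : ℝ) :
    HasDerivAt (uPlus v) (uPlus v y - momentum v y) y := by
  have hv' : ContDiff ℝ 1 (deriv v) := hv.deriv' (n := 1)
  refine ((hv.differentiable two_ne_zero y).hasDerivAt.add
    (hv'.differentiable one_ne_zero y).hasDerivAt).congr_deriv ?_
  simp only [uPlus, momentum]; ring

theorem hasDerivAt_uMinus (hv : ContDiff ℝ 2 v) (y : ℝ) :
    HasDerivAt (uMinus v) (momentum v y - uMinus v y) y := by
  have hv' : ContDiff ℝ 1 (deriv v) := hv.deriv' (n := 1)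
  refine ((hv.differentiable two_ne_zero y).hasDerivAt.sub
    (hv'.differentiable one_ne_zero y).hasDerivAt).congr_deriv ?_
  simp only [uMinus, momentum]; ring

theorem hasDerivAt_momentum (hv : ContDiff ℝ 3 v) (y : ℝ) :
    HasDerivAt (momentum v) (deriv (momentum v) y) y := by
  have hv'' : ContDiff ℝ 1 (deriv (deriv v)) := (hv.deriv' (n := 2)).deriv' (n := 1)
  exact ((hv.differentiable (by norm_num) y).sub (hv''.differentiable one_ne_zero y)).hasDerivAt

theorem hasDerivAt_J (hv : ContDiff ℝ 2 v) (y : ℝ) : HasDerivAt (J a v) (Jx a v y) y := by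
  refine (hasDerivAt_re (((hasDerivAt_uPlus hv y).mul
    (hasDerivAt_uMinus hv y).star).const_mul a)).congr_deriv ?_
  simp only [Jx, Complex.star_def, map_sub]
  congr 1; ring

theorem hasDerivAt_Jx (hv : ContDiff ℝ 3 v) (y : ℝ) :
    HasDerivAt (Jx a v) (a * ((uPlus v y - momentum v y) * conj (momentum v y)
      + uPlus v y * conj (deriv (momentum v) y) - (deriv (momentum v) y * conj (uMinus v y)
      + momentum v y * conj (momentum v y - uMinus v y)))).re y :=
  hasDerivAt_re ((((hasDerivAt_uPlus (hv.of_le (by norm_num)) y).mul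
    (hasDerivAt_momentum hv y).star).sub ((hasDerivAt_momentum hv y).mul
    (hasDerivAt_uMinus (hv.of_le (by norm_num)) y).star)).const_mul a)

theorem integrable_momentum (f : 𝓢(ℝ, ℂ)) : Integrable (momentum f) :=
  (f - derivCLM ℝ ℂ (derivCLM ℝ ℂ f)).integrable

theorem norm_uPlus_le (f : 𝓢(ℝ, ℂ)) (x : ℝ) : ‖uPlus f x‖ ≤ ∫ y, ‖momentum f y‖ := by
  simpa only [sub_sub_cancel] using norm_le_integral_norm_sub_deriv
    (hasDerivAt_uPlus (f.smooth 2)) ((f + derivCLM ℝ ℂ f).tendsto_cocompact.mono_left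
      atTop_le_cocompact) (by simpa only [sub_sub_cancel] using integrable_momentum f) x

theorem norm_uMinus_le (f : 𝓢(ℝ, ℂ)) (x : ℝ) : ‖uMinus f x‖ ≤ ∫ y, ‖momentum f y‖ := by
  simpa only [add_sub_cancel] using norm_le_integral_norm_add_deriv
    (hasDerivAt_uMinus (f.smooth 2)) ((f - derivCLM ℝ ℂ f).tendsto_cocompact.mono_left
      atBot_le_cocompact) (by simpa only [add_sub_cancel] using integrable_momentum f) x

theorem norm_mul_Q_le (ha : ‖a‖ ≤ 1) (f : 𝓢(ℝ, ℂ)) (y : ℝ) :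
    ‖a * Q f y‖ ≤ (∫ y, ‖momentum f y‖) ^ 2 := calc
  ‖a * Q f y‖ = ‖a‖ * (‖uPlus f y‖ * ‖uMinus f y‖) := by
    simp only [Q, norm_mul, Complex.norm_conj]
  _ ≤ 1 * ((∫ y, ‖momentum f y‖) * ∫ y, ‖momentum f y‖) := by
    gcongr
    exacts [norm_uPlus_le f y, norm_uMinus_le f y]
  _ = (∫ y, ‖momentum f y‖) ^ 2 := by ring

theorem continuous_Q (f : 𝓢(ℝ, ℂ)) : Continuous (Q f) :=
  (f + derivCLM ℝ ℂ f).continuous.mul (f - derivCLM ℝ ℂ f).continuous.star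

theorem tendsto_J_mul_momentum (ha : ‖a‖ ≤ 1) (f : 𝓢(ℝ, ℂ)) {l : Filter ℝ}
    (hl : l ≤ cocompact ℝ) : Tendsto (fun y => (J a f y : ℂ) * momentum f y) l (𝓝 0) := by
  refine squeeze_zero_norm (fun y => ?_) (by simpa using
    (((f - derivCLM ℝ ℂ (derivCLM ℝ ℂ f)).tendsto_cocompact.mono_left hl).norm.const_mul
      ((∫ y, ‖momentum f y‖) ^ 2)))
  rw [norm_mul, Complex.norm_real]
  exact mul_le_mul_of_nonneg_right ((Complex.abs_re_le_norm _).trans (norm_mul_Q_le ha f y))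
    (norm_nonneg _)

theorem norm_uPlus_sub_J_mul_momentum_le (ha : ‖a‖ ≤ 1) {f g : 𝓢(ℝ, ℂ)}
    (hpde : TransportEq a f g) (x : ℝ) :
    ‖uPlus g x - J a f x * momentum f x‖ ≤ (∫ y, ‖momentum f y‖) ^ 3 := by
  have hd : ∀ y, HasDerivAt (fun y => uPlus g y - J a f y * momentum f y)
      (uPlus g y - momentum g y - (Jx a f y * momentum f y + J a f y * deriv (momentum f) y)) y :=
    fun y => (hasDerivAt_uPlus (g.smooth 2) y).sub
      ((hasDerivAt_J (f.smooth 2) y).ofReal_comp.mul (hasDerivAt_momentum (f.smooth 3) y))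
  have hsub : ∀ y, uPlus g y - J a f y * momentum f y - (uPlus g y - momentum g y
      - (Jx a f y * momentum f y + J a f y * deriv (momentum f) y))
      = -conj (a * Q f y) * momentum f y := fun y => by
    have hconj : conj (a * Q f y) = J a f y - (a * Q f y).im * Complex.I :=
      Complex.ext (by simp [J]) (by simp [J]; ring)
    rw [hconj]
    linear_combination hpde y
  have hlim : Tendsto (fun y => uPlus g y - J a f y * momentum f y) atTop (𝓝 0) := by
    simpa [uPlus] using ((g + derivCLM ℝ ℂ g).tendsto_cocompact.mono_left atTop_le_cocompact).sub
      (tendsto_J_mul_momentum ha f atTop_le_cocompact)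
  have hint : Integrable fun y => -conj (a * Q f y) * momentum f y :=
    (integrable_momentum f).bdd_mul
      (Complex.continuous_conj.comp (continuous_const.mul (continuous_Q f))).neg.aestronglyMeasurable
      (ae_of_all _ fun y => by rw [norm_neg, Complex.norm_conj]; exact norm_mul_Q_le ha f y)
  calc _ ≤ _ := norm_le_integral_norm_sub_deriv hd hlim (by simpa only [hsub] using hint) x
    _ ≤ (∫ y, ‖momentum f y‖) ^ 2 * ∫ y, ‖momentum f y‖ := by
      simp only [hsub]
      refine integral_norm_mul_le (fun y => ?_) (integrable_momentum f)
      rw [norm_neg, Complex.norm_conj]; exact norm_mul_Q_le ha f y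
    _ = (∫ y, ‖momentum f y‖) ^ 3 := by ring

theorem norm_uMinus_add_J_mul_momentum_le (ha : ‖a‖ ≤ 1) {f g : 𝓢(ℝ, ℂ)}
    (hpde : TransportEq a f g) (x : ℝ) :
    ‖uMinus g x + J a f x * momentum f x‖ ≤ (∫ y, ‖momentum f y‖) ^ 3 := by
  have hd : ∀ y, HasDerivAt (fun y => uMinus g y + J a f y * momentum f y)
      (momentum g y - uMinus g y + (Jx a f y * momentum f y + J a f y * deriv (momentum f) y)) y :=
    fun y => (hasDerivAt_uMinus (g.smooth 2) y).add
      ((hasDerivAt_J (f.smooth 2) y).ofReal_comp.mul (hasDerivAt_momentum (f.smooth 3) y))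
  have hadd : ∀ y, uMinus g y + J a f y * momentum f y + (momentum g y - uMinus g y
      + (Jx a f y * momentum f y + J a f y * deriv (momentum f) y))
      = a * Q f y * momentum f y := fun y => by
    have hA : (J a f y : ℂ) + (a * Q f y).im * Complex.I = a * Q f y := Complex.re_add_im _
    linear_combination hpde y + momentum f y * hA
  have hlim : Tendsto (fun y => uMinus g y + J a f y * momentum f y) atBot (𝓝 0) := by
    simpa [uMinus] using ((g - derivCLM ℝ ℂ g).tendsto_cocompact.mono_left atBot_le_cocompact).add
      (tendsto_J_mul_momentum ha f atBot_le_cocompact)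
  have hint : Integrable fun y => a * Q f y * momentum f y :=
    (integrable_momentum f).bdd_mul (continuous_const.mul (continuous_Q f)).aestronglyMeasurable
      (ae_of_all _ (norm_mul_Q_le ha f))
  calc _ ≤ _ := norm_le_integral_norm_add_deriv hd hlim (by simpa only [hadd] using hint) x
    _ ≤ (∫ y, ‖momentum f y‖) ^ 2 * ∫ y, ‖momentum f y‖ := by
      simp only [hadd]
      exact integral_norm_mul_le (norm_mul_Q_le ha f) (integrable_momentum f)
    _ = (∫ y, ‖momentum f y‖) ^ 3 := by ring

section TimeDerivative

variable {u ut : ℝ → ℝ → ℂ} {s : Set ℝ} {t : ℝ}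

theorem hasDerivWithinAt_uPlus_time (hs : Convex ℝ s) (hs' : (interior s).Nonempty)
    (hu : ContDiffOn ℝ 2 (uncurry u) (s ×ˢ univ))
    (hut : ∀ τ ∈ s, ∀ y, HasDerivWithinAt (u · y) (ut τ y) s τ) (ht : t ∈ s) (x : ℝ) :
    HasDerivWithinAt (fun τ => uPlus (u τ) x) (uPlus (ut t) x) s t :=
  (hut t ht x).add (hasDerivWithinAt_deriv_snd_of_contDiffOn hs hs' hu hut ht x)

theorem hasDerivWithinAt_uMinus_time (hs : Convex ℝ s) (hs' : (interior s).Nonempty)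
    (hu : ContDiffOn ℝ 2 (uncurry u) (s ×ˢ univ))
    (hut : ∀ τ ∈ s, ∀ y, HasDerivWithinAt (u · y) (ut τ y) s τ) (ht : t ∈ s) (x : ℝ) :
    HasDerivWithinAt (fun τ => uMinus (u τ) x) (uMinus (ut t) x) s t :=
  (hut t ht x).sub (hasDerivWithinAt_deriv_snd_of_contDiffOn hs hs' hu hut ht x)

theorem hasDerivWithinAt_momentum_time (hs : Convex ℝ s) (hs' : (interior s).Nonempty)
    (hu : ContDiffOn ℝ 3 (uncurry u) (s ×ˢ univ))
    (hut : ∀ τ ∈ s, ∀ y, HasDerivWithinAt (u · y) (ut τ y) s τ) (ht : t ∈ s) (x : ℝ) :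
    HasDerivWithinAt (fun τ => momentum (u τ) x) (momentum (ut t) x) s t :=
  (hut t ht x).sub (hasDerivWithinAt_deriv_deriv_snd_of_contDiffOn hs hs' hu hut ht x)

theorem hasDerivWithinAt_Jx_time (hs : Convex ℝ s) (hs' : (interior s).Nonempty)
    (hu : ContDiffOn ℝ 3 (uncurry u) (s ×ˢ univ))
    (hut : ∀ τ ∈ s, ∀ y, HasDerivWithinAt (u · y) (ut τ y) s τ) (ht : t ∈ s) (x : ℝ) :
    HasDerivWithinAt (fun τ => Jx a (u τ) x)
      (a * (uPlus (ut t) x * conj (momentum (u t) x) + uPlus (u t) x * conj (momentum (ut t) x)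
        - (momentum (ut t) x * conj (uMinus (u t) x)
          + momentum (u t) x * conj (uMinus (ut t) x)))).re s t := by
  have hu2 : ContDiffOn ℝ 2 (uncurry u) (s ×ˢ univ) := hu.of_le (by norm_num)
  exact hasDerivWithinAt_re ((((hasDerivWithinAt_uPlus_time hs hs' hu2 hut ht x).mul
    (hasDerivWithinAt_momentum_time hs hs' hu hut ht x).star).sub
    ((hasDerivWithinAt_momentum_time hs hs' hu hut ht x).mul
      (hasDerivWithinAt_uMinus_time hs hs' hu2 hut ht x).star)).const_mul a)

end TimeDerivative

theorem riccati_identity (a φ χ m mx P N : ℂ) {J Jx : ℝ} (hJ : J = (a * (φ * conj χ)).re)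
    (hJx : Jx = (a * (φ * conj m - m * conj χ)).re) :
    (a * ((J * m - P) * conj m + φ * conj ((a * (φ * conj χ) - J - Jx) * m - J * mx)
        - (((a * (φ * conj χ) - J - Jx) * m - J * mx) * conj χ + m * conj (N - J * m)))).re
      + J * (a * ((φ - m) * conj m + φ * conj mx - (mx * conj χ + m * conj (m - χ)))).re
      + Jx ^ 2
    = (a * φ * conj (a * (φ * conj χ)) * conj m).re - (a * (a * (φ * conj χ)) * m * conj χ).re
      + 2 * J * (a * m * conj χ).re - (a * conj m * P).re - (a * m * conj N).re := by
  subst hJ hJx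
  simp only [Complex.mul_re, Complex.mul_im, Complex.sub_re, Complex.sub_im, Complex.add_re,
    Complex.add_im, Complex.conj_re, Complex.conj_im, Complex.ofReal_re, Complex.ofReal_im,
    map_sub, map_mul, Complex.conj_ofReal]
  ring

theorem riccati_remainder_le {a φ χ m P N : ℂ} {J M : ℝ} (ha : ‖a‖ ≤ 1) (hφ : ‖φ‖ ≤ M)
    (hχ : ‖χ‖ ≤ M) (hJ : J = (a * (φ * conj χ)).re) (hP : ‖P‖ ≤ M ^ 3) (hN : ‖N‖ ≤ M ^ 3) :
    (a * φ * conj (a * (φ * conj χ)) * conj m).re - (a * (a * (φ * conj χ)) * m * conj χ).re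
      + 2 * J * (a * m * conj χ).re - (a * conj m * P).re - (a * m * conj N).re
      ≤ 6 * M ^ 3 * ‖m‖ := by
  have hM : 0 ≤ M := (norm_nonneg φ).trans hφ
  set A := a * (φ * conj χ)
  have hA : ‖A‖ ≤ M ^ 2 := calc
    ‖A‖ = ‖a‖ * (‖φ‖ * ‖χ‖) := by simp only [A, norm_mul, Complex.norm_conj]
    _ ≤ 1 * (M * M) := by gcongr
    _ = M ^ 2 := by ring
  have hJM : |J| ≤ M ^ 2 := hJ ▸ (Complex.abs_re_le_norm A).trans hA
  have h1 : (a * φ * conj A * conj m).re ≤ M ^ 3 * ‖m‖ := calc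
    _ ≤ ‖a‖ * ‖φ‖ * ‖A‖ * ‖m‖ :=
      (Complex.re_le_norm _).trans_eq (by simp only [norm_mul, Complex.norm_conj])
    _ ≤ 1 * M * M ^ 2 * ‖m‖ := by gcongr
    _ = M ^ 3 * ‖m‖ := by ring
  have h2 : -(a * A * m * conj χ).re ≤ M ^ 3 * ‖m‖ := calc
    _ ≤ ‖a‖ * ‖A‖ * ‖m‖ * ‖χ‖ := ((neg_le_abs _).trans (Complex.abs_re_le_norm _)).trans_eq
        (by simp only [norm_mul, Complex.norm_conj])
    _ ≤ 1 * M ^ 2 * ‖m‖ * M := by gcongr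
    _ = M ^ 3 * ‖m‖ := by ring
  have h3 : 2 * J * (a * m * conj χ).re ≤ 2 * (M ^ 3 * ‖m‖) := calc
    _ ≤ 2 * (|J| * |(a * m * conj χ).re|) := by
      rw [mul_assoc, ← abs_mul]
      gcongr
      exact le_abs_self _
    _ ≤ 2 * (M ^ 2 * (‖a‖ * ‖m‖ * ‖χ‖)) := by
      gcongr
      exact (Complex.abs_re_le_norm _).trans_eq (by simp only [norm_mul, Complex.norm_conj])
    _ ≤ 2 * (M ^ 2 * (1 * ‖m‖ * M)) := by gcongr
    _ = 2 * (M ^ 3 * ‖m‖) := by ring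
  have h4 : -(a * conj m * P).re ≤ M ^ 3 * ‖m‖ := calc
    _ ≤ ‖a‖ * ‖m‖ * ‖P‖ := ((neg_le_abs _).trans (Complex.abs_re_le_norm _)).trans_eq
        (by simp only [norm_mul, Complex.norm_conj])
    _ ≤ 1 * ‖m‖ * M ^ 3 := by gcongr
    _ = M ^ 3 * ‖m‖ := by ring
  have h5 : -(a * m * conj N).re ≤ M ^ 3 * ‖m‖ := calc
    _ ≤ ‖a‖ * ‖m‖ * ‖N‖ := ((neg_le_abs _).trans (Complex.abs_re_le_norm _)).trans_eq
        (by simp only [norm_mul, Complex.norm_conj])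
    _ ≤ 1 * ‖m‖ * M ^ 3 := by gcongr
    _ = M ^ 3 * ‖m‖ := by ring
  linarith

theorem riccati_bound {a φ χ m mx mt φt χt : ℂ} {J Jx M : ℝ} (ha : ‖a‖ ≤ 1) (hφ : ‖φ‖ ≤ M)
    (hχ : ‖χ‖ ≤ M) (hJ : J = (a * (φ * conj χ)).re)
    (hJx : Jx = (a * (φ * conj m - m * conj χ)).re)
    (hmt : mt + J * mx = (Complex.I * (a * (φ * conj χ)).im - Jx) * m)
    (hφt : ‖φt - J * m‖ ≤ M ^ 3) (hχt : ‖χt + J * m‖ ≤ M ^ 3) :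
    (a * (φt * conj m + φ * conj mt - (mt * conj χ + m * conj χt))).re
      + J * (a * ((φ - m) * conj m + φ * conj mx - (mx * conj χ + m * conj (m - χ)))).re
      + Jx ^ 2 ≤ 6 * M ^ 3 * ‖m‖ := by
  obtain rfl : mt = (a * (φ * conj χ) - J - Jx) * m - J * mx := by
    have hA : (J : ℂ) + (a * (φ * conj χ)).im * Complex.I = a * (φ * conj χ) :=
      hJ ▸ Complex.re_add_im _
    linear_combination hmt + m * hA
  obtain ⟨P, rfl⟩ : ∃ P, φt = J * m - P := ⟨J * m - φt, by ring⟩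
  obtain ⟨N, rfl⟩ : ∃ N, χt = N - J * m := ⟨χt + J * m, by ring⟩
  rw [sub_sub_cancel_left, norm_neg] at hφt
  rw [sub_add_cancel] at hχt
  rw [riccati_identity a φ χ m mx P N hJ hJx]
  exact riccati_remainder_le ha hφ hχ hJ hφt hχt

theorem riccati_slice_bound (ha : ‖a‖ ≤ 1) {f g : 𝓢(ℝ, ℂ)}
    (hpde : TransportEq a f g)
    {M : ℝ} (hM : ∫ y, ‖momentum f y‖ ≤ M) (x : ℝ) :
    (a * (uPlus g x * conj (momentum f x) + uPlus f x * conj (momentum g x)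
        - (momentum g x * conj (uMinus f x) + momentum f x * conj (uMinus g x)))).re
      + J a f x * deriv (Jx a f) x + Jx a f x ^ 2 ≤ 6 * M ^ 3 * ‖momentum f x‖ := by
  have hM3 : (∫ y, ‖momentum f y‖) ^ 3 ≤ M ^ 3 :=
    pow_le_pow_left₀ (integral_nonneg fun _ => norm_nonneg _) hM 3
  rw [(hasDerivAt_Jx (f.smooth 3) x).deriv]
  exact riccati_bound ha ((norm_uPlus_le f x).trans hM) ((norm_uMinus_le f x).trans hM) rfl rfl
    (hpde x) ((norm_uPlus_sub_J_mul_momentum_le ha hpde x).trans hM3)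
    ((norm_uMinus_add_J_mul_momentum_le ha hpde x).trans hM3)

end Peakon

theorem riccati_pointwise_estimate_general
    (θ T M : ℝ)
    (u ut ux m mt : ℝ → ℝ → ℂ) (Q : ℝ → ℝ → ℂ) (J Jx : ℝ → ℝ → ℝ) (K : ℝ → ℝ → ℂ)
    (hsmooth : ∀ n : ℕ, ContDiffOn ℝ n (Function.uncurry u) (Ico 0 T ×ˢ univ))
    (hSch : ∀ t ∈ Ico (0:ℝ) T, ∃ f : SchwartzMap ℝ ℂ, ∀ x, f x = u t x)
    (hut : ∀ t ∈ Ico (0:ℝ) T, ∀ x : ℝ,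
      HasDerivWithinAt (fun s => u s x) (ut t x) (Ico 0 T) t)
    (hSch' : ∀ t ∈ Ico (0:ℝ) T, ∃ f : SchwartzMap ℝ ℂ, ∀ x, f x = ut t x)
    (hux : ∀ t x, ux t x = deriv (fun y => u t y) x)
    (hm : ∀ t x, m t x = u t x - deriv (fun y => deriv (fun z => u t z) y) x)
    (hQ : ∀ t x, Q t x = (u t x + ux t x) * (starRingEnd ℂ (u t x) - starRingEnd ℂ (ux t x)))
    (hJ : ∀ t x, J t x = (Complex.exp (θ * Complex.I) * Q t x).re)
    (hJx : ∀ t x, Jx t x = deriv (fun y => J t y) x)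
    (hK : ∀ t x, K t x = Complex.I * (((Complex.exp (θ * Complex.I) * Q t x).im : ℝ) : ℂ)
      - ((Jx t x : ℝ) : ℂ))
    (hmt : ∀ t ∈ Ico (0:ℝ) T, ∀ x : ℝ,
      HasDerivWithinAt (fun s => m s x) (mt t x) (Ico 0 T) t)
    (heq : ∀ t ∈ Ico (0:ℝ) T, ∀ x : ℝ,
      mt t x + ((J t x : ℝ) : ℂ) * deriv (fun y => m t y) x = K t x * m t x)
    (hM : ∀ t ∈ Ico (0:ℝ) T, ∫ y : ℝ, ‖m t y‖ ≤ M) :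
    ∀ t ∈ Ico (0:ℝ) T, ∀ x : ℝ,
      derivWithin (fun s => Jx s x) (Ico 0 T) t
          + J t x * deriv (fun y => Jx t y) x + (Jx t x) ^ 2
        ≤ 7 * M ^ 3 * ‖m t x‖ := by
  intro t ht x
  set a := Complex.exp (θ * Complex.I)
  have hs' : (interior (Ico 0 T)).Nonempty := by
    rw [interior_Ico]; exact nonempty_Ioo.2 (ht.1.trans_lt ht.2)
  have hsm : ContDiffOn ℝ 3 (uncurry u) (Ico 0 T ×ˢ univ) := by exact_mod_cast hsmooth 3
  have hms : ∀ s, m s = Peakon.momentum (u s) := fun s => funext (hm s)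
  have hQs : ∀ s, Q s = Peakon.Q (u s) := fun s => funext fun y => by
    rw [hQ, hux, ← map_sub]; rfl
  have hJs : ∀ s, J s = Peakon.J a (u s) := fun s => funext fun y => by rw [hJ, hQs]; rfl
  have hJxs : ∀ s ∈ Ico 0 T, Jx s = Peakon.Jx a (u s) := fun s hs => funext fun y => by
    obtain ⟨f, hf⟩ := hSch s hs
    rw [hJx, hJs, show u s = f from funext fun y => (hf y).symm]
    exact (Peakon.hasDerivAt_J (f.smooth 2) y).deriv
  obtain ⟨f, hf⟩ := hSch t ht
  obtain ⟨g, hg⟩ := hSch' t ht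
  replace hf : u t = f := funext fun y => (hf y).symm
  replace hg : ut t = g := funext fun y => (hg y).symm
  have hmtg : mt t = Peakon.momentum g := funext fun y => (uniqueDiffOn_Ico 0 T t ht).eq_deriv _
    (hmt t ht y) (by simpa only [hms, hg] using
      Peakon.hasDerivWithinAt_momentum_time (convex_Ico 0 T) hs' hsm hut ht y)
  have hpde : Peakon.TransportEq a f g := fun y => by
    simpa only [hmtg, hK, hJs, hJxs t ht, hms, hQs, hf] using heq t ht y
  have hJxt : HasDerivWithinAt (fun s => Jx s x) _ (Ico 0 T) t :=
    (Peakon.hasDerivWithinAt_Jx_time (a := a) (convex_Ico 0 T) hs' hsm hut ht x).congr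
    (fun s hs => by rw [hJxs s hs]) (by rw [hJxs t ht])
  rw [hJxt.derivWithin (uniqueDiffOn_Ico 0 T t ht), hJs, hJxs t ht, hms, hf, hg]
  refine (Peakon.riccati_slice_bound (Complex.norm_exp_ofReal_mul_I θ).le hpde
    (by simpa only [hms, hf] using hM t ht) x).trans ?_
  have hM0 : 0 ≤ M := (integral_nonneg fun _ => norm_nonneg _).trans (hM t ht)
  gcongr
  norm_num

theorem riccati_pointwise_estimate
    (θ T M : ℝ) (hθ : θ ∈ Ico 0 Real.pi) (hT : 0 < T) (hMpos : 0 < M)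
    (u ut ux m mt : ℝ → ℝ → ℂ) (Q : ℝ → ℝ → ℂ) (J Jx : ℝ → ℝ → ℝ) (K : ℝ → ℝ → ℂ)
    (hsmooth : ∀ n : ℕ, ContDiffOn ℝ n (Function.uncurry u) (Ico 0 T ×ˢ univ))
    (hSch : ∀ t ∈ Ico (0:ℝ) T, ∃ f : SchwartzMap ℝ ℂ, ∀ x, f x = u t x)
    (hut : ∀ t ∈ Ico (0:ℝ) T, ∀ x : ℝ,
      HasDerivWithinAt (fun s => u s x) (ut t x) (Ico 0 T) t)
    (hSch' : ∀ t ∈ Ico (0:ℝ) T, ∃ f : SchwartzMap ℝ ℂ, ∀ x, f x = ut t x)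
    (hux : ∀ t x, ux t x = deriv (fun y => u t y) x)
    (hm : ∀ t x, m t x = u t x - deriv (fun y => deriv (fun z => u t z) y) x)
    (hQ : ∀ t x, Q t x = (u t x + ux t x) * (starRingEnd ℂ (u t x) - starRingEnd ℂ (ux t x)))
    (hJ : ∀ t x, J t x = (Complex.exp (θ * Complex.I) * Q t x).re)
    (hJx : ∀ t x, Jx t x = deriv (fun y => J t y) x)
    (hK : ∀ t x, K t x = Complex.I * (((Complex.exp (θ * Complex.I) * Q t x).im : ℝ) : ℂ)
      - ((Jx t x : ℝ) : ℂ))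
    (hmt : ∀ t ∈ Ico (0:ℝ) T, ∀ x : ℝ,
      HasDerivWithinAt (fun s => m s x) (mt t x) (Ico 0 T) t)
    (heq : ∀ t ∈ Ico (0:ℝ) T, ∀ x : ℝ,
      mt t x + ((J t x : ℝ) : ℂ) * deriv (fun y => m t y) x = K t x * m t x)
    (hM : ∀ t ∈ Ico (0:ℝ) T, ∫ y : ℝ, ‖m t y‖ ≤ M) :
    ∀ t ∈ Ico (0:ℝ) T, ∀ x : ℝ,
      derivWithin (fun s => Jx s x) (Ico 0 T) t
          + J t x * deriv (fun y => Jx t y) x + (Jx t x) ^ 2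
        ≤ 7 * M ^ 3 * ‖m t x‖ :=
  riccati_pointwise_estimate_general θ T M u ut ux m mt Q J Jx K hsmooth hSch hut hSch' hux hm hQ hJ
    hJx hK hmt heq hM
end

section
/- Let T > 0, A ≥ 0, and let w : [0,T) → ℝ be continuously differentiable and satisfy w'(t) + w(t)² ≤ A · exp(−∫₀ᵗ w(τ) dτ) for all t ∈ [0,T). Then exp(∫₀ᵗ w(τ) dτ) ≤ 1 + w(0) t + (A/2) t² for all t ∈ [0,T). -/
/-!
Put `E(t) = exp ∫₀ᵗ w`. Then `E' = w E` and `E'' = (w' + w²) E ≤ A`, the exponential weight in the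
hypothesis cancelling against `E`. Integrating `E'' ≤ A` twice from `E(0) = 1`, `E'(0) = w(0)` gives
the quadratic bound.
-/

open Set

theorem image_le_of_hasDerivAt_le_of_le_left {f g f' g' : ℝ → ℝ} {a b : ℝ}
    (hf : ContinuousOn f (Icc a b)) (hg : ContinuousOn g (Icc a b))
    (hf' : ∀ t ∈ Ioo a b, HasDerivAt f (f' t) t) (hg' : ∀ t ∈ Ioo a b, HasDerivAt g (g' t) t)
    (ha : f a ≤ g a) (hle : ∀ t ∈ Ioo a b, f' t ≤ g' t) :
    ∀ t ∈ Icc a b, f t ≤ g t := by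
  have hanti : AntitoneOn (f - g) (Icc a b) := by
    refine antitoneOn_of_hasDerivWithinAt_nonpos (f' := f' - g') (convex_Icc a b) (hf.sub hg)
      ?_ ?_ <;> rw [interior_Icc]
    · exact fun t ht ↦ ((hf' t ht).sub (hg' t ht)).hasDerivWithinAt
    · exact fun t ht ↦ sub_nonpos.mpr (hle t ht)
  intro t ht
  have := hanti (left_mem_Icc.mpr (ht.1.trans ht.2)) ht ht.1
  simp only [Pi.sub_apply] at this
  linarith

theorem image_le_quadratic_of_hasDerivAt_hasDerivAt_le {f f' f'' : ℝ → ℝ} {a b A : ℝ}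
    (hf : ContinuousOn f (Icc a b)) (hf'c : ContinuousOn f' (Icc a b))
    (hf' : ∀ t ∈ Ioo a b, HasDerivAt f (f' t) t) (hf'' : ∀ t ∈ Ioo a b, HasDerivAt f' (f'' t) t)
    (hA : ∀ t ∈ Ioo a b, f'' t ≤ A) :
    ∀ t ∈ Icc a b, f t ≤ f a + f' a * (t - a) + A / 2 * (t - a) ^ 2 := by
  have hline : ∀ t, HasDerivAt (fun s ↦ s - a) 1 t := fun t ↦ (hasDerivAt_id t).sub_const a
  have hpoly : ∀ t, HasDerivAt (fun s ↦ f a + f' a * (s - a) + A / 2 * (s - a) ^ 2)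
      (f' a + A * (t - a)) t := fun t ↦ by
    refine ((((hline t).const_mul (f' a)).const_add (f a)).add
      (((hline t).fun_pow 2).const_mul (A / 2))).congr_deriv ?_
    push_cast
    ring
  have hslope : ∀ t ∈ Icc a b, f' t ≤ f' a + A * (t - a) :=
    image_le_of_hasDerivAt_le_of_le_left hf'c (by fun_prop) hf''
      (fun t _ ↦ (((hline t).const_mul A).const_add _).congr_deriv (mul_one A))
      (by simp) hA
  exact image_le_of_hasDerivAt_le_of_le_left hf (by fun_prop) hf' (fun t _ ↦ hpoly t) (by simp)
    fun t ht ↦ hslope t (Ioo_subset_Icc_self ht)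

theorem ContinuousOn.hasDerivAt_primitive_of_mem_Ioo {E : Type*} [NormedAddCommGroup E]
    [NormedSpace ℝ E] [CompleteSpace E] {f : ℝ → E} {a b : ℝ} (hf : ContinuousOn f (Icc a b)) :
    ∀ t ∈ Ioo a b, HasDerivAt (fun u ↦ ∫ x in a..u, f x) (f t) t := fun t ht ↦
  intervalIntegral.integral_hasDerivAt_right
    ((hf.mono (Icc_subset_Icc_right ht.2.le)).intervalIntegrable_of_Icc ht.1.le)
    ((hf.mono Ioo_subset_Icc_self).stronglyMeasurableAtFilter isOpen_Ioo t ht)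
    (hf.continuousAt (Icc_mem_nhds ht.1 ht.2))

theorem ode_comparison_estimate_general
    (T A : ℝ)
    (w w' : ℝ → ℝ)
    (hw : ∀ t ∈ Ico (0:ℝ) T, HasDerivWithinAt w (w' t) (Ico 0 T) t)
    (hineq : ∀ t ∈ Ico (0:ℝ) T,
      w' t + (w t) ^ 2 ≤ A * Real.exp (-∫ τ in (0:ℝ)..t, w τ)) :
    ∀ t ∈ Ico (0:ℝ) T,
      Real.exp (∫ τ in (0:ℝ)..t, w τ) ≤ 1 + w 0 * t + (A / 2) * t ^ 2 := by
  rintro b ⟨hb0, hbT⟩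
  have hsub : Icc 0 b ⊆ Ico 0 T := Icc_subset_Ico_right hbT
  have hwc : ContinuousOn w (Icc 0 b) := fun t ht ↦ (hw t (hsub ht)).continuousWithinAt.mono hsub
  have hw' : ∀ t ∈ Ioo 0 b, HasDerivAt w (w' t) t := fun t ht ↦
    (hw t (hsub (Ioo_subset_Icc_self ht))).hasDerivAt (Ico_mem_nhds ht.1 (ht.2.trans hbT))
  set W : ℝ → ℝ := fun t ↦ ∫ τ in (0:ℝ)..t, w τ
  have hWc : ContinuousOn W (Icc 0 b) := by
    rw [← uIcc_of_le hb0]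
    exact intervalIntegral.continuousOn_primitive_interval
      (by rw [uIcc_of_le hb0]; exact hwc.integrableOn_Icc)
  have hW' : ∀ t ∈ Ioo 0 b, HasDerivAt W (w t) t := hwc.hasDerivAt_primitive_of_mem_Ioo
  have hE'' : ∀ t ∈ Ioo 0 b, (w' t + w t ^ 2) * Real.exp (W t) ≤ A := fun t ht ↦ by
    have h := mul_le_mul_of_nonneg_right (hineq t (hsub (Ioo_subset_Icc_self ht)))
      (Real.exp_pos (W t)).le
    rwa [mul_assoc, ← Real.exp_add, neg_add_cancel, Real.exp_zero, mul_one] at h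
  have hquad := image_le_quadratic_of_hasDerivAt_hasDerivAt_le (f := fun t ↦ Real.exp (W t))
    (Real.continuous_exp.comp_continuousOn hWc)
    (hwc.mul (Real.continuous_exp.comp_continuousOn hWc))
    (fun t ht ↦ (hW' t ht).exp.congr_deriv (mul_comm _ _))
    (fun t ht ↦ ((hw' t ht).mul (hW' t ht).exp).congr_deriv (by ring)) hE'' b
    (right_mem_Icc.mpr hb0)
  simpa [W] using hquad

theorem ode_comparison_estimate
    (T A : ℝ) (hT : 0 < T) (hA : 0 ≤ A)
    (w w' : ℝ → ℝ)
    (hw : ∀ t ∈ Ico (0:ℝ) T, HasDerivWithinAt w (w' t) (Ico 0 T) t)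
    (hw'c : ContinuousOn w' (Ico 0 T))
    (hineq : ∀ t ∈ Ico (0:ℝ) T,
      w' t + (w t) ^ 2 ≤ A * Real.exp (-∫ τ in (0:ℝ)..t, w τ)) :
    ∀ t ∈ Ico (0:ℝ) T,
      Real.exp (∫ τ in (0:ℝ)..t, w τ) ≤ 1 + w 0 * t + (A / 2) * t ^ 2 :=
  ode_comparison_estimate_general T A w w' hw hineq
end

section
/- Let A > 0 and w₀ < 0 with w₀² > 2A, and set T₁ = (−w₀ − √(w₀² − 2A))/A, which is positive. Suppose w : [0,T₁) → ℝ is continuously differentiable, w(0) = w₀, and w'(t) + w(t)² ≤ A · exp(−∫₀ᵗ w(τ) dτ) for all t ∈ [0,T₁). Then ∫₀ᵗ w(τ) dτ → −∞ as t ↑ T₁, and consequently inf_{t ∈ [0,T₁)} w(t) = −∞. -/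
open Set Filter

-- Finite-time blow-up for the differential inequality `w' + w² ≤ A·exp(−∫₀ᵗ w)`
-- with `w(0) = w₀ < 0` and `w₀² > 2A`: setting `T₁ = (−w₀ − √(w₀² − 2A))/A > 0`,
-- one has `∫₀ᵗ w → −∞` as `t ↑ T₁`, and hence `inf_{[0,T₁)} w = −∞`.
theorem blowup_differential_inequality
    (A w₀ : ℝ) (hA : 0 < A) (hw₀ : w₀ < 0) (hdisc : w₀ ^ 2 > 2 * A)
    (T₁ : ℝ) (hT₁ : T₁ = (-w₀ - Real.sqrt (w₀ ^ 2 - 2 * A)) / A)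
    (w w' : ℝ → ℝ)
    (hw : ∀ t ∈ Ico (0:ℝ) T₁, HasDerivWithinAt w (w' t) (Ico 0 T₁) t)
    (hw'c : ContinuousOn w' (Ico 0 T₁))
    (hw0 : w 0 = w₀)
    (hineq : ∀ t ∈ Ico (0:ℝ) T₁,
      w' t + (w t) ^ 2 ≤ A * Real.exp (-∫ τ in (0:ℝ)..t, w τ)) :
    0 < T₁ ∧
      Tendsto (fun t => ∫ τ in (0:ℝ)..t, w τ) (nhdsWithin T₁ (Iio T₁)) atBot ∧
      ∀ c : ℝ, ∃ t ∈ Ico (0:ℝ) T₁, w t < c := by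
  set s : ℝ := Real.sqrt (w₀ ^ 2 - 2 * A) with hs
  have hs2 : s ^ 2 = w₀ ^ 2 - 2 * A := Real.sq_sqrt (by linarith)
  have hslt : s < -w₀ := (Real.sqrt_lt' (by linarith)).2 (by nlinarith)
  have hT₁pos : 0 < T₁ := by
    rw [hT₁]; exact div_pos (by linarith) hA
  -- W is the primitive of w
  set W : ℝ → ℝ := fun t => ∫ τ in (0:ℝ)..t, w τ with hW
  have hW0 : W 0 = 0 := intervalIntegral.integral_same
  have hcw : ContinuousOn w (Ico 0 T₁) := fun t ht => (hw t ht).continuousWithinAt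
  have hIccsub : ∀ b ∈ Ico (0:ℝ) T₁, Icc (0:ℝ) b ⊆ Ico 0 T₁ := by
    intro b hb x hx
    exact ⟨hx.1, lt_of_le_of_lt hx.2 hb.2⟩
  have hint : ∀ b ∈ Ico (0:ℝ) T₁, IntervalIntegrable w MeasureTheory.volume 0 b := by
    intro b hb
    exact (hcw.mono (hIccsub b hb)).intervalIntegrable_of_Icc hb.1
  have hWc : ∀ b ∈ Ico (0:ℝ) T₁, ContinuousOn W (Icc 0 b) := by
    intro b hb
    have h1 : MeasureTheory.IntegrableOn w (uIcc 0 b) MeasureTheory.volume := by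
      rw [uIcc_of_le hb.1]
      exact (hcw.mono (hIccsub b hb)).integrableOn_compact isCompact_Icc
    have := intervalIntegral.continuousOn_primitive_interval h1
    rwa [uIcc_of_le hb.1] at this
  -- derivative of W at interior points
  have hWd : ∀ t ∈ Ioo (0:ℝ) T₁, HasDerivAt W (w t) t := by
    intro t ht
    have hmem : Ico (0:ℝ) T₁ ∈ nhds t := Ico_mem_nhds ht.1 ht.2
    have hct : ContinuousAt w t := (hcw t ⟨ht.1.le, ht.2⟩).continuousAt hmem
    have hcw' : ContinuousOn w (Ioo 0 T₁) := hcw.mono Ioo_subset_Ico_self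
    have hmeas := hcw'.stronglyMeasurableAtFilter (μ := MeasureTheory.volume) isOpen_Ioo t ht
    exact intervalIntegral.integral_hasDerivAt_right (hint t ⟨ht.1.le, ht.2⟩) hmeas hct
  have hwd : ∀ t ∈ Ioo (0:ℝ) T₁, HasDerivAt w (w' t) t := by
    intro t ht
    exact (hw t ⟨ht.1.le, ht.2⟩).hasDerivAt (Ico_mem_nhds ht.1 ht.2)
  -- Key comparison: exp(W b) ≤ 1 + w₀ b + A/2 b²
  have key : ∀ b ∈ Ico (0:ℝ) T₁, Real.exp (W b) ≤ 1 + w₀ * b + A / 2 * b ^ 2 := by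
    intro b hb
    rcases eq_or_lt_of_le hb.1 with h0 | h0
    · rw [← h0]
      simp [hW0]
    have h0mem : (0:ℝ) ∈ Icc (0:ℝ) b := ⟨le_refl _, h0.le⟩
    -- Step A : w t * exp (W t) ≤ w₀ + A t on Icc 0 b
    have stepA : ∀ t ∈ Icc (0:ℝ) b, w t * Real.exp (W t) ≤ w₀ + A * t := by
      have hmono : MonotoneOn (fun t => w₀ + A * t - w t * Real.exp (W t)) (Icc 0 b) := by
        apply monotoneOn_of_deriv_nonneg (convex_Icc 0 b)
        · apply ContinuousOn.sub (by fun_prop)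
          exact ((hcw.mono (hIccsub b hb)).mul ((hWc b hb).rexp))
        · rw [interior_Icc]
          intro x hx
          have hx' : x ∈ Ioo (0:ℝ) T₁ := ⟨hx.1, lt_of_le_of_lt hx.2.le hb.2⟩
          have hd : HasDerivAt (fun t => w₀ + A * t - w t * Real.exp (W t))
              (A - (w' x * Real.exp (W x) + w x * (Real.exp (W x) * w x))) x :=
            (((hasDerivAt_const x w₀).add ((hasDerivAt_id x).const_mul A)).sub
              ((hwd x hx').mul ((hWd x hx').exp))).congr_deriv (by ring)
          exact hd.differentiableAt.differentiableWithinAt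
        · rw [interior_Icc]
          intro x hx
          have hx' : x ∈ Ioo (0:ℝ) T₁ := ⟨hx.1, lt_of_le_of_lt hx.2.le hb.2⟩
          have hd : HasDerivAt (fun t => w₀ + A * t - w t * Real.exp (W t))
              (A - (w' x * Real.exp (W x) + w x * (Real.exp (W x) * w x))) x :=
            (((hasDerivAt_const x w₀).add ((hasDerivAt_id x).const_mul A)).sub
              ((hwd x hx').mul ((hWd x hx').exp))).congr_deriv (by ring)
          rw [hd.deriv]
          have hiq := hineq x ⟨hx'.1.le, hx'.2⟩
          have hE : (0:ℝ) < Real.exp (W x) := Real.exp_pos _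
          have h2 : (w' x + w x ^ 2) * Real.exp (W x)
              ≤ A * Real.exp (-W x) * Real.exp (W x) :=
            mul_le_mul_of_nonneg_right hiq hE.le
          rw [mul_assoc, ← Real.exp_add, neg_add_cancel, Real.exp_zero, mul_one] at h2
          nlinarith [h2]
      intro t ht
      have h1 := hmono h0mem ht ht.1
      simp only [hw0, hW0, Real.exp_zero, mul_one, mul_zero, add_zero] at h1
      linarith
    -- Step B : exp (W t) ≤ 1 + w₀ t + A/2 t²
    have hmono2 : MonotoneOn (fun t => 1 + w₀ * t + A / 2 * t ^ 2 - Real.exp (W t)) (Icc 0 b) := by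
      apply monotoneOn_of_deriv_nonneg (convex_Icc 0 b)
      · apply ContinuousOn.sub (by fun_prop)
        exact (hWc b hb).rexp
      · rw [interior_Icc]
        intro x hx
        have hx' : x ∈ Ioo (0:ℝ) T₁ := ⟨hx.1, lt_of_le_of_lt hx.2.le hb.2⟩
        have hd : HasDerivAt (fun t => 1 + w₀ * t + A / 2 * t ^ 2 - Real.exp (W t))
            (w₀ + A * x - Real.exp (W x) * w x) x := by
          have h1 : HasDerivAt (fun t : ℝ => 1 + w₀ * t + A / 2 * t ^ 2)
              (w₀ + A * x) x := by
            have := (((hasDerivAt_id x).const_mul w₀).const_add 1).add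
              (((hasDerivAt_pow 2 x)).const_mul (A / 2))
            exact this.congr_deriv (by push_cast; ring)
          exact h1.sub ((hWd x hx').exp)
        exact hd.differentiableAt.differentiableWithinAt
      · rw [interior_Icc]
        intro x hx
        have hx' : x ∈ Ioo (0:ℝ) T₁ := ⟨hx.1, lt_of_le_of_lt hx.2.le hb.2⟩
        have hd : HasDerivAt (fun t => 1 + w₀ * t + A / 2 * t ^ 2 - Real.exp (W t))
            (w₀ + A * x - Real.exp (W x) * w x) x := by
          have h1 : HasDerivAt (fun t : ℝ => 1 + w₀ * t + A / 2 * t ^ 2)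
              (w₀ + A * x) x := by
            have := (((hasDerivAt_id x).const_mul w₀).const_add 1).add
              (((hasDerivAt_pow 2 x)).const_mul (A / 2))
            exact this.congr_deriv (by push_cast; ring)
          exact h1.sub ((hWd x hx').exp)
        rw [hd.deriv]
        have := stepA x ⟨hx.1.le, hx.2.le⟩
        linarith [this]
    have h1 := hmono2 h0mem ⟨hb.1, le_refl b⟩ hb.1
    simp only [hW0, Real.exp_zero, mul_zero, add_zero] at h1
    have : (1:ℝ) + w₀ * 0 + A / 2 * 0 ^ 2 - 1 = 0 := by ring
    nlinarith [h1]
  -- The quadratic vanishes at T₁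
  have hq0 : 1 + w₀ * T₁ + A / 2 * T₁ ^ 2 = 0 := by
    rw [hT₁]
    field_simp
    nlinarith [hs2]
  -- Tendsto atBot
  have htend : Tendsto W (nhdsWithin T₁ (Iio T₁)) atBot := by
    rw [tendsto_atBot]
    intro c
    have hq : Tendsto (fun t => 1 + w₀ * t + A / 2 * t ^ 2) (nhdsWithin T₁ (Iio T₁)) (nhds 0) := by
      have hc : Continuous (fun t : ℝ => 1 + w₀ * t + A / 2 * t ^ 2) := by fun_prop
      have := (hc.tendsto T₁).mono_left (nhdsWithin_le_nhds (s := Iio T₁))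
      rwa [hq0] at this
    have h3 : ∀ᶠ t in nhdsWithin T₁ (Iio T₁), 1 + w₀ * t + A / 2 * t ^ 2 < Real.exp c :=
      hq.eventually_lt_const (Real.exp_pos c)
    have h4 : ∀ᶠ t in nhdsWithin T₁ (Iio T₁), t ∈ Ico (0:ℝ) T₁ := by
      filter_upwards [Ioo_mem_nhdsLT hT₁pos] with t ht
      exact ⟨ht.1.le, ht.2⟩
    filter_upwards [h3, h4] with t h3 h4
    have := lt_of_le_of_lt (key t h4) h3
    exact (Real.exp_lt_exp.1 this).le
  refine ⟨hT₁pos, htend, ?_⟩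
  -- inf = -∞
  intro c
  by_contra hcon
  push_neg at hcon
  have hWlb : ∀ t ∈ Ico (0:ℝ) T₁, min (c * T₁) 0 ≤ W t := by
    intro t ht
    have h1 : ∫ τ in (0:ℝ)..t, (c:ℝ) ≤ W t := by
      apply intervalIntegral.integral_mono_on ht.1 intervalIntegrable_const (hint t ht)
      intro x hx
      exact hcon x (hIccsub t ht hx)
    rw [intervalIntegral.integral_const, smul_eq_mul, sub_zero] at h1
    have h2 : min (c * T₁) 0 ≤ t * c := by
      rcases le_or_gt 0 c with hc | hc
      · have : 0 ≤ t * c := mul_nonneg ht.1 hc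
        exact le_trans (min_le_right _ _) this
      · have : c * T₁ ≤ t * c := by nlinarith [ht.1, ht.2.le]
        exact le_trans (min_le_left _ _) this
    linarith
  have hev : ∀ᶠ t in nhdsWithin T₁ (Iio T₁),
      W t < min (c * T₁) 0 := htend.eventually (eventually_lt_atBot _)
  have h4 : ∀ᶠ t in nhdsWithin T₁ (Iio T₁), t ∈ Ico (0:ℝ) T₁ := by
    filter_upwards [Ioo_mem_nhdsLT hT₁pos] with t ht
    exact ⟨ht.1.le, ht.2⟩
  obtain ⟨t, ht1, ht2⟩ := (hev.and h4).exists
  exact absurd (hWlb t ht2) (not_le.2 ht1)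
end
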